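/- Let P = {P_j} be a complete family of orthogonal projectors on an m-dimensional space and T = {T_k} a complete family of orthogonal projectors on an n-dimensional space, and let α ∈ (0,1), z ≥ max{α,1−α}. Then for all density matrices ρ (m×m) and τ (n×n): C_{α,z}(ρ ⊕ τ, P ⊕ T) ≤ C_{α,z}(ρ, P) + C_{α,z}(τ, T), where ρ ⊕ τ is the block-diagonal direct sum, P ⊕ T is the complete projector family on the (m+n)-dimensional direct sum space consisting of the projectors P_j ⊕ 0 and 0 ⊕ T_k, and C_{α,z}(A, M) = 1 − (max_{σ ∈ I_B(M)} Tr[(σ^{(1−α)/(2z)} A^{α/z} σ^{(1−α)/(2z)})^z])^{1/α} is applied to the positive semidefinite matrix A = ρ ⊕ τ with the maximum over block-incoherent density matrices σ for the family M = P ⊕ T. -/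

import Mathlib

open Matrix
open scoped ComplexOrder Classical

namespace BlockCoherence

variable {n : Type*} [Fintype n] [DecidableEq n]

/-- Real part of the trace of a complex matrix. -/
noncomputable def retr (A : Matrix n n ℂ) : ℝ := (Matrix.trace A).re

/-- A density matrix: positive semidefinite with trace 1. -/
def IsDensityMatrix (ρ : Matrix n n ℂ) : Prop := ρ.PosSemidef ∧ Matrix.trace ρ = 1

/-- A complete family of orthogonal projectors. -/
def IsProjFamily {K : Type*} [Fintype K] (P : K → Matrix n n ℂ) : Prop :=
  (∀ k, (P k).IsHermitian) ∧ (∀ k, P k * P k = P k) ∧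
    (∀ j k, j ≠ k → P j * P k = 0) ∧ (∑ k, P k = 1)

/-- Block dephasing map Δ(ρ) = Σ_k P_k ρ P_k. -/
noncomputable def deph {K : Type*} [Fintype K] (P : K → Matrix n n ℂ)
    (ρ : Matrix n n ℂ) : Matrix n n ℂ := ∑ k, P k * ρ * P k

/-- Block incoherent (free) states. -/
def IsBlockIncoherent {K : Type*} [Fintype K] (P : K → Matrix n n ℂ)
    (σ : Matrix n n ℂ) : Prop := IsDensityMatrix σ ∧ σ = deph P σ

/-- A block-incoherent operation presented by its Kraus operators. -/
def IsBIOp {K : Type*} [Fintype K] {N : Type*} [Fintype N]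
    (P : K → Matrix n n ℂ) (Kr : N → Matrix n n ℂ) : Prop :=
  (∑ m, (Kr m)ᴴ * Kr m = 1) ∧
    ∀ (m : N) (i j : K), i ≠ j → ∀ σ, IsBlockIncoherent P σ →
      P i * (Kr m * σ * (Kr m)ᴴ) * P j = 0

/-- The channel determined by Kraus operators. -/
noncomputable def krausApply {N : Type*} [Fintype N]
    (Kr : N → Matrix n n ℂ) (ρ : Matrix n n ℂ) : Matrix n n ℂ :=
  ∑ m, Kr m * ρ * (Kr m)ᴴ

/-- A block coherence measure: conditions (B1)-(B4). -/
structure IsBlockCoherenceMeasure {K : Type*} [Fintype K] (P : K → Matrix n n ℂ)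
    (C : Matrix n n ℂ → ℝ) : Prop where
  nonneg : ∀ ρ, IsDensityMatrix ρ → 0 ≤ C ρ
  eq_zero_iff : ∀ ρ, IsDensityMatrix ρ → (C ρ = 0 ↔ IsBlockIncoherent P ρ)
  monotone : ∀ ρ, IsDensityMatrix ρ → ∀ {N : Type} [Fintype N] (Kr : N → Matrix n n ℂ),
    IsBIOp P Kr → C (krausApply Kr ρ) ≤ C ρ
  strong_monotone : ∀ ρ, IsDensityMatrix ρ → ∀ {N : Type} [Fintype N] (Kr : N → Matrix n n ℂ),
    IsBIOp P Kr →
      ∑ m, (if retr (Kr m * ρ * (Kr m)ᴴ) = 0 then (0 : ℝ) else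
        retr (Kr m * ρ * (Kr m)ᴴ) *
          C ((retr (Kr m * ρ * (Kr m)ᴴ))⁻¹ • (Kr m * ρ * (Kr m)ᴴ))) ≤ C ρ
  convex : ∀ {N : Type} [Fintype N] (p : N → ℝ) (ρs : N → Matrix n n ℂ),
    (∀ m, 0 ≤ p m) → ∑ m, p m = 1 → (∀ m, IsDensityMatrix (ρs m)) →
      C (∑ m, p m • ρs m) ≤ ∑ m, p m * C (ρs m)

/-- Real power of a matrix via the spectral functional calculus (0 on non-Hermitian input). -/
noncomputable def mpow (A : Matrix n n ℂ) (t : ℝ) : Matrix n n ℂ :=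
  if hA : A.IsHermitian then
    (hA.eigenvectorUnitary : Matrix n n ℂ) *
      Matrix.diagonal (fun i => ((hA.eigenvalues i ^ t : ℝ) : ℂ)) *
      (star (hA.eigenvectorUnitary : Matrix n n ℂ))
  else 0

/-- Positive semidefinite square root (0 on non-PSD input). -/
noncomputable def msqrt (A : Matrix n n ℂ) : Matrix n n ℂ :=
  if hA : A.PosSemidef then
    (hA.1.eigenvectorUnitary : Matrix n n ℂ) *
      Matrix.diagonal ((↑) ∘ Real.sqrt ∘ hA.1.eigenvalues) *
      (star hA.1.eigenvectorUnitary : Matrix n n ℂ)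
  else 0

/-- Base-2 matrix logarithm via spectral calculus, with the convention log 0 = 0. -/
noncomputable def mlog2 (A : Matrix n n ℂ) : Matrix n n ℂ :=
  if hA : A.IsHermitian then
    (hA.eigenvectorUnitary : Matrix n n ℂ) *
      Matrix.diagonal (fun i => ((Real.logb 2 (hA.eigenvalues i) : ℝ) : ℂ)) *
      (star (hA.eigenvectorUnitary : Matrix n n ℂ))
  else 0

/-- Trace norm ‖M‖_Tr = Tr √(MᴴM). -/
noncomputable def trNorm (M : Matrix n n ℂ) : ℝ :=
  retr (msqrt (Mᴴ * M))

/-- The α-z Rényi block coherence measure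
`C_{α,z}(ρ,P) = 1 - (max_{σ∈I_B} Tr[(σ^{(1-α)/(2z)} ρ^{α/z} σ^{(1-α)/(2z)})^z])^{1/α}`. -/
noncomputable def Caz {K : Type*} [Fintype K] (α z : ℝ) (P : K → Matrix n n ℂ)
    (ρ : Matrix n n ℂ) : ℝ :=
  1 - (sSup {x : ℝ | ∃ σ, IsBlockIncoherent P σ ∧
    x = retr (mpow (mpow σ ((1 - α) / (2 * z)) * mpow ρ (α / z) *
      mpow σ ((1 - α) / (2 * z))) z)}) ^ (1 / α)

end BlockCoherence

/-! Mixing free states of the two summands block-diagonally, `σ = l σ₁ ⊕ (1 - l) σ₂`, gives a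
free state for `P ⊕ T`; the sandwiched trace splits over the blocks and scales like `l ^ (1 - α)`
in the weight. Choosing `l` as in the equality case of Hölder's inequality turns attainable values
`x`, `y` for `ρ` and `τ` into the attainable value `(x ^ (1/α) + y ^ (1/α)) ^ α` for `ρ ⊕ τ`.
Hence the maxima satisfy `F_ρ ^ (1/α) + F_τ ^ (1/α) ≤ F_{ρ⊕τ} ^ (1/α)`, which is stronger than
the claim. -/

namespace BlockCoherence

section Spectral

variable {n : Type*} [DecidableEq n]

theorem isHermitian_diagonal_ofReal (d : n → ℝ) :
    (diagonal fun i => (d i : ℂ)).IsHermitian :=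
  isHermitian_diagonal_of_self_adjoint _ (funext fun i => Complex.conj_ofReal (d i))

variable [Fintype n]

theorem mul_diagonal_comp_eq_of_mul_diagonal_eq {W : Matrix n n ℂ} {e d : n → ℝ}
    (h : W * diagonal (fun i => (e i : ℂ)) = diagonal (fun i => (d i : ℂ)) * W) (f : ℝ → ℝ) :
    W * diagonal (fun i => (f (e i) : ℂ)) = diagonal (fun i => (f (d i) : ℂ)) * W := by
  ext i j
  have hij := congr_fun₂ h i j
  simp only [mul_diagonal, diagonal_mul] at hij ⊢
  by_cases hW : W i j = 0
  · simp [hW]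
  · have : e j = d i := by exact_mod_cast mul_left_cancel₀ hW (hij.trans (mul_comm _ _))
    rw [this, mul_comm]

theorem _root_.Matrix.IsHermitian.eq_eigenvectorUnitary_mul_diagonal {A : Matrix n n ℂ}
    (hA : A.IsHermitian) :
    A = (hA.eigenvectorUnitary : Matrix n n ℂ) * diagonal (fun i => (hA.eigenvalues i : ℂ)) *
      (hA.eigenvectorUnitary : Matrix n n ℂ)ᴴ := by
  simpa [Unitary.conjStarAlgAut_apply, Function.comp_def, star_eq_conjTranspose] using
    hA.spectral_theorem

theorem mpow_of_isHermitian {A : Matrix n n ℂ} (hA : A.IsHermitian) (t : ℝ) :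
    mpow A t = (hA.eigenvectorUnitary : Matrix n n ℂ) *
      diagonal (fun i => ((hA.eigenvalues i ^ t : ℝ) : ℂ)) *
      (hA.eigenvectorUnitary : Matrix n n ℂ)ᴴ := by
  rw [mpow, dif_pos hA]
  rfl

theorem mpow_unitary_mul_diagonal {V : Matrix n n ℂ} (hV : V ∈ unitaryGroup n ℂ) (d : n → ℝ)
    (t : ℝ) :
    mpow (V * diagonal (fun i => (d i : ℂ)) * Vᴴ) t =
      V * diagonal (fun i => ((d i ^ t : ℝ) : ℂ)) * Vᴴ := by
  have hA := isHermitian_mul_mul_conjTranspose V (isHermitian_diagonal_ofReal d)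
  set U := (hA.eigenvectorUnitary : Matrix n n ℂ)
  have hU : U ∈ unitaryGroup n ℂ := hA.eigenvectorUnitary.2
  have hUU : U * Uᴴ = 1 := Unitary.mul_star_self_of_mem hU
  have hUU' : Uᴴ * U = 1 := Unitary.star_mul_self_of_mem hU
  have hVV : V * Vᴴ = 1 := Unitary.mul_star_self_of_mem hV
  have hVV' : Vᴴ * V = 1 := Unitary.star_mul_self_of_mem hV
  have hspec := hA.eq_eigenvectorUnitary_mul_diagonal
  -- `Vᴴ U` intertwines the two diagonal forms of the same matrix, hence also their powers
  have hW : (Vᴴ * U) * diagonal (fun i => (hA.eigenvalues i : ℂ)) =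
      diagonal (fun i => (d i : ℂ)) * (Vᴴ * U) := by
    calc (Vᴴ * U) * diagonal (fun i => (hA.eigenvalues i : ℂ))
        = Vᴴ * (U * diagonal (fun i => (hA.eigenvalues i : ℂ)) * Uᴴ) * U := by
          simp only [Matrix.mul_assoc, hUU', Matrix.mul_one]
      _ = (Vᴴ * V) * diagonal (fun i => (d i : ℂ)) * (Vᴴ * U) := by
          rw [← hspec]; simp only [Matrix.mul_assoc]
      _ = diagonal (fun i => (d i : ℂ)) * (Vᴴ * U) := by rw [hVV', Matrix.one_mul]
  have hWt := mul_diagonal_comp_eq_of_mul_diagonal_eq hW (· ^ t)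
  rw [mpow_of_isHermitian hA]
  calc U * diagonal (fun i => ((hA.eigenvalues i ^ t : ℝ) : ℂ)) * Uᴴ
      = V * ((Vᴴ * U) * diagonal (fun i => ((hA.eigenvalues i ^ t : ℝ) : ℂ))) * (Uᴴ * V) * Vᴴ := by
        simp only [Matrix.mul_assoc, hVV, Matrix.mul_one]
        simp only [← Matrix.mul_assoc, hVV, Matrix.one_mul]
    _ = V * diagonal (fun i => ((d i ^ t : ℝ) : ℂ)) * Vᴴ := by
        rw [hWt]
        simp only [Matrix.mul_assoc]
        simp only [← Matrix.mul_assoc U, hUU, Matrix.one_mul, ← Matrix.mul_assoc Vᴴ V, hVV',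
          Matrix.one_mul]

theorem mpow_isHermitian (A : Matrix n n ℂ) (t : ℝ) : (mpow A t).IsHermitian := by
  by_cases hA : A.IsHermitian
  · rw [mpow_of_isHermitian hA]
    exact isHermitian_mul_mul_conjTranspose _ (isHermitian_diagonal_ofReal _)
  · rw [mpow, dif_neg hA]
    exact isHermitian_zero

theorem mpow_posSemidef {A : Matrix n n ℂ} (hA : A.PosSemidef) (t : ℝ) :
    (mpow A t).PosSemidef := by
  rw [mpow_of_isHermitian hA.1]
  refine PosSemidef.mul_mul_conjTranspose_same ?_ _
  exact posSemidef_diagonal_iff.mpr fun i =>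
    Complex.zero_le_real.mpr (Real.rpow_nonneg (hA.eigenvalues_nonneg i) t)

theorem mpow_mul_mpow {A : Matrix n n ℂ} (hA : A.PosSemidef) {s t : ℝ} (hst : s + t ≠ 0) :
    mpow A s * mpow A t = mpow A (s + t) := by
  have hUU : (hA.1.eigenvectorUnitary : Matrix n n ℂ)ᴴ * hA.1.eigenvectorUnitary = 1 :=
    Unitary.star_mul_self_of_mem hA.1.eigenvectorUnitary.2
  simp only [mpow_of_isHermitian hA.1, Matrix.mul_assoc]
  rw [← Matrix.mul_assoc _ (hA.1.eigenvectorUnitary : Matrix n n ℂ), hUU, Matrix.one_mul,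
    ← Matrix.mul_assoc (diagonal _), diagonal_mul_diagonal]
  congr 3
  ext i
  rw [Real.rpow_add' (hA.eigenvalues_nonneg i) hst, Complex.ofReal_mul]

theorem mpow_one {A : Matrix n n ℂ} (hA : A.IsHermitian) : mpow A 1 = A := by
  conv_rhs => rw [hA.eq_eigenvectorUnitary_mul_diagonal]
  simp only [mpow_of_isHermitian hA, Real.rpow_one]

theorem smul_mul_diagonal_mul (c : ℝ) (V : Matrix n n ℂ) (d : n → ℝ) :
    c • (V * diagonal (fun i => (d i : ℂ)) * Vᴴ) =
      V * diagonal (fun i => ((c * d i : ℝ) : ℂ)) * Vᴴ := by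
  rw [← smul_mul_assoc, ← mul_smul_comm, ← diagonal_smul]
  congr 3
  ext i
  simp [Complex.real_smul]

theorem mpow_smul {A : Matrix n n ℂ} (hA : A.PosSemidef) {c : ℝ} (hc : 0 ≤ c) (t : ℝ) :
    mpow (c • A) t = c ^ t • mpow A t := by
  conv_lhs => rw [hA.1.eq_eigenvectorUnitary_mul_diagonal]
  rw [smul_mul_diagonal_mul, mpow_unitary_mul_diagonal hA.1.eigenvectorUnitary.2,
    mpow_of_isHermitian hA.1, smul_mul_diagonal_mul]
  congr 3
  ext i
  rw [Real.mul_rpow hc (hA.eigenvalues_nonneg i)]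

theorem retr_unitary_mul_diagonal {V : Matrix n n ℂ} (hV : V ∈ unitaryGroup n ℂ) (d : n → ℝ) :
    retr (V * diagonal (fun i => (d i : ℂ)) * Vᴴ) = ∑ i, d i := by
  have hVV : Vᴴ * V = 1 := Unitary.star_mul_self_of_mem hV
  rw [retr, trace_mul_cycle, hVV, Matrix.one_mul, trace_diagonal, Complex.re_sum]
  simp

theorem retr_mpow {A : Matrix n n ℂ} (hA : A.IsHermitian) (t : ℝ) :
    retr (mpow A t) = ∑ i, hA.eigenvalues i ^ t := by
  rw [mpow_of_isHermitian hA, retr_unitary_mul_diagonal hA.eigenvectorUnitary.2]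

end Spectral

section Blocks

variable {m p : Type*} [Fintype m] [Fintype p]

theorem trace_fromBlocks {R : Type*} [AddCommMonoid R] (A : Matrix m m R) (B : Matrix m p R)
    (C : Matrix p m R) (D : Matrix p p R) :
    trace (fromBlocks A B C D) = trace A + trace D := by
  simp [trace, Fintype.sum_sum_type]

theorem posSemidef_fromBlocks {A : Matrix m m ℂ} {B : Matrix p p ℂ} (hA : A.PosSemidef)
    (hB : B.PosSemidef) : (fromBlocks A 0 0 B).PosSemidef := by
  refine PosSemidef.of_dotProduct_mulVec_nonneg (hA.1.fromBlocks (by simp) hB.1) fun x => ?_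
  rw [← Sum.elim_comp_inl_inr x]
  simp only [dotProduct, Sum.elim_comp_inl_inr, Pi.star_apply, RCLike.star_def, fromBlocks_mulVec,
    zero_mulVec, add_zero, zero_add, Fintype.sum_sum_type, Sum.elim_inl, Sum.elim_inr]
  exact add_nonneg (hA.dotProduct_mulVec_nonneg _) (hB.dotProduct_mulVec_nonneg _)

variable [DecidableEq m] [DecidableEq p]

theorem fromBlocks_mul_diagonal_mul_conjTranspose (V : Matrix m m ℂ) (W : Matrix p p ℂ)
    (d : m ⊕ p → ℂ) :
    fromBlocks V 0 0 W * diagonal d * (fromBlocks V 0 0 W)ᴴ =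
      fromBlocks (V * diagonal (d ∘ Sum.inl) * Vᴴ) 0 0 (W * diagonal (d ∘ Sum.inr) * Wᴴ) := by
  rw [← Sum.elim_comp_inl_inr d, ← fromBlocks_diagonal, fromBlocks_conjTranspose,
    fromBlocks_multiply, fromBlocks_multiply]
  simp

theorem fromBlocks_mem_unitaryGroup {V : Matrix m m ℂ} {W : Matrix p p ℂ}
    (hV : V ∈ unitaryGroup m ℂ) (hW : W ∈ unitaryGroup p ℂ) :
    fromBlocks V 0 0 W ∈ unitaryGroup (m ⊕ p) ℂ := by
  rw [mem_unitaryGroup_iff, star_eq_conjTranspose, fromBlocks_conjTranspose, fromBlocks_multiply]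
  simp [← star_eq_conjTranspose, mem_unitaryGroup_iff.mp hV, mem_unitaryGroup_iff.mp hW]

theorem mpow_fromBlocks {A : Matrix m m ℂ} {B : Matrix p p ℂ} (hA : A.IsHermitian)
    (hB : B.IsHermitian) (t : ℝ) :
    mpow (fromBlocks A 0 0 B) t = fromBlocks (mpow A t) 0 0 (mpow B t) := by
  set V := fromBlocks (hA.eigenvectorUnitary : Matrix m m ℂ) 0 0
    (hB.eigenvectorUnitary : Matrix p p ℂ)
  have hV : V ∈ unitaryGroup (m ⊕ p) ℂ :=
    fromBlocks_mem_unitaryGroup hA.eigenvectorUnitary.2 hB.eigenvectorUnitary.2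
  have hAB : fromBlocks A 0 0 B =
      V * diagonal (fun i => ((Sum.elim hA.eigenvalues hB.eigenvalues i : ℝ) : ℂ)) * Vᴴ := by
    rw [fromBlocks_mul_diagonal_mul_conjTranspose]
    exact congrArg₂ (fromBlocks · 0 0 ·) hA.eq_eigenvectorUnitary_mul_diagonal
      hB.eq_eigenvectorUnitary_mul_diagonal
  rw [hAB, mpow_unitary_mul_diagonal hV, fromBlocks_mul_diagonal_mul_conjTranspose,
    mpow_of_isHermitian hA, mpow_of_isHermitian hB]
  rfl

end Blocks

section Trace

variable {n : Type*} [Fintype n]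

theorem retr_nonneg {A : Matrix n n ℂ} (hA : A.PosSemidef) : 0 ≤ retr A :=
  (Complex.nonneg_iff.mp hA.trace_nonneg).1

theorem retr_smul (c : ℝ) (A : Matrix n n ℂ) : retr (c • A) = c * retr A := by
  simp [retr, trace_smul]

variable [DecidableEq n]

theorem retr_eq_sum_eigenvalues {A : Matrix n n ℂ} (hA : A.IsHermitian) :
    retr A = ∑ i, hA.eigenvalues i := by
  simp [retr, hA.trace_eq_sum_eigenvalues]

theorem eigenvalues_le_retr {A : Matrix n n ℂ} (hA : A.PosSemidef) (i : n) :
    hA.1.eigenvalues i ≤ retr A := by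
  rw [retr_eq_sum_eigenvalues hA.1]
  exact Finset.single_le_sum (fun j _ => hA.eigenvalues_nonneg j) (Finset.mem_univ i)

theorem retr_mpow_le {A : Matrix n n ℂ} (hA : A.PosSemidef) {z : ℝ} (hz : 0 ≤ z) :
    retr (mpow A z) ≤ Fintype.card n * retr A ^ z := by
  rw [retr_mpow hA.1, ← nsmul_eq_mul, ← Finset.card_univ, ← Finset.sum_const]
  exact Finset.sum_le_sum fun i _ =>
    Real.rpow_le_rpow (hA.eigenvalues_nonneg i) (eigenvalues_le_retr hA i) hz

theorem retr_mul_mul_le {A X : Matrix n n ℂ} (hAA : (1 - A * A).PosSemidef)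
    (hX : X.PosSemidef) : retr (A * X * A) ≤ retr X := by
  set S := mpow X (1 / 2)
  have hSS : S * S = X := by
    rw [mpow_mul_mpow hX (by norm_num), add_halves, mpow_one hX.1]
  have hS : Sᴴ = S := mpow_isHermitian X _
  have hcyc : (A * (S * S) * A).trace = (S * (A * A) * S).trace := by
    simp only [Matrix.mul_assoc]
    rw [trace_mul_comm A, Matrix.mul_assoc, trace_mul_comm S]
    simp only [Matrix.mul_assoc]
  have hdiff : retr X - retr (A * X * A) = retr (S * (1 - A * A) * Sᴴ) := by
    rw [hS, ← hSS, retr, retr, retr, hcyc, ← Complex.sub_re, ← trace_sub]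
    congr 2
    noncomm_ring
  linarith [retr_nonneg (hAA.mul_mul_conjTranspose_same S)]

theorem one_sub_mpow_posSemidef {σ : Matrix n n ℂ} (hσ : IsDensityMatrix σ) {t : ℝ}
    (ht : 0 ≤ t) : (1 - mpow σ t).PosSemidef := by
  have hretr : retr σ = 1 := by simp [retr, hσ.2]
  rw [mpow_of_isHermitian hσ.1.1]
  set U := (hσ.1.1.eigenvectorUnitary : Matrix n n ℂ)
  set e := hσ.1.1.eigenvalues
  have hUU : U * Uᴴ = 1 := Unitary.mul_star_self_of_mem hσ.1.1.eigenvectorUnitary.2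
  have hdiag : diagonal (fun i => ((1 - e i ^ t : ℝ) : ℂ)) =
      1 - diagonal (fun i => ((e i ^ t : ℝ) : ℂ)) := by
    ext i j
    by_cases hij : i = j <;> simp [hij, one_apply]
  have hsub : 1 - U * diagonal (fun i => ((e i ^ t : ℝ) : ℂ)) * Uᴴ =
      U * diagonal (fun i => ((1 - e i ^ t : ℝ) : ℂ)) * Uᴴ := by
    rw [hdiag, Matrix.mul_sub, Matrix.sub_mul, Matrix.mul_one, hUU]
  rw [hsub]
  refine PosSemidef.mul_mul_conjTranspose_same (posSemidef_diagonal_iff.mpr fun i => ?_) U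
  have hle : e i ≤ 1 := (eigenvalues_le_retr hσ.1 i).trans_eq hretr
  exact Complex.zero_le_real.mpr
    (sub_nonneg.mpr (Real.rpow_le_one (hσ.1.eigenvalues_nonneg i) hle ht))

end Trace

section Sandwich

variable {n : Type*} [Fintype n] [DecidableEq n]

/-- `Tr[(σ^a ρ^b σ^a)^z]`; `Caz` maximises it with `a = (1-α)/(2z)` and `b = α/z`. -/
noncomputable def sandwichTrace (a b z : ℝ) (ρ σ : Matrix n n ℂ) : ℝ :=
  retr (mpow (mpow σ a * mpow ρ b * mpow σ a) z)

theorem posSemidef_mpow_sandwich {ρ : Matrix n n ℂ} (hρ : ρ.PosSemidef) (a b : ℝ)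
    (σ : Matrix n n ℂ) :
    (mpow σ a * mpow ρ b * mpow σ a).PosSemidef := by
  simpa only [(mpow_isHermitian σ a).eq] using
    (mpow_posSemidef hρ b).mul_mul_conjTranspose_same (mpow σ a)

theorem sandwichTrace_nonneg {ρ : Matrix n n ℂ} (hρ : ρ.PosSemidef) (a b z : ℝ)
    (σ : Matrix n n ℂ) : 0 ≤ sandwichTrace a b z ρ σ :=
  retr_nonneg (mpow_posSemidef (posSemidef_mpow_sandwich hρ a b σ) z)

theorem sandwichTrace_le {ρ σ : Matrix n n ℂ} (hρ : ρ.PosSemidef) (hσ : IsDensityMatrix σ)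
    {a : ℝ} (ha : 0 < a) (b : ℝ) {z : ℝ} (hz : 0 ≤ z) :
    sandwichTrace a b z ρ σ ≤ Fintype.card n * retr (mpow ρ b) ^ z := by
  have hM := posSemidef_mpow_sandwich hρ a b σ
  have hσσ : (1 - mpow σ a * mpow σ a).PosSemidef := by
    rw [mpow_mul_mpow hσ.1 (by positivity)]
    exact one_sub_mpow_posSemidef hσ (by positivity)
  refine (retr_mpow_le hM hz).trans (mul_le_mul_of_nonneg_left ?_ (Nat.cast_nonneg _))
  exact Real.rpow_le_rpow (retr_nonneg hM) (retr_mul_mul_le hσσ (mpow_posSemidef hρ b)) hz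

theorem sandwichTrace_smul {ρ σ : Matrix n n ℂ} (hρ : ρ.PosSemidef) (hσ : σ.PosSemidef)
    (a b z : ℝ) {c : ℝ} (hc : 0 ≤ c) :
    sandwichTrace a b z ρ (c • σ) = c ^ (2 * a * z) * sandwichTrace a b z ρ σ := by
  have hcc : c ^ a * c ^ a = c ^ (2 * a) := by
    rw [← sq, ← Real.rpow_natCast, ← Real.rpow_mul hc]
    ring_nf
  rw [sandwichTrace, sandwichTrace, mpow_smul hσ hc, smul_mul_assoc, smul_mul_assoc, mul_smul_comm,
    smul_smul, hcc, mpow_smul (posSemidef_mpow_sandwich hρ a b σ) (by positivity), retr_smul,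
    ← Real.rpow_mul hc]

theorem sandwichTrace_fromBlocks {m p : Type*} [Fintype m] [DecidableEq m] [Fintype p]
    [DecidableEq p] {ρ σ : Matrix m m ℂ} {τ ω : Matrix p p ℂ} (hρ : ρ.PosSemidef)
    (hτ : τ.PosSemidef) (hσ : σ.IsHermitian) (hω : ω.IsHermitian) (a b z : ℝ) :
    sandwichTrace a b z (fromBlocks ρ 0 0 τ) (fromBlocks σ 0 0 ω) =
      sandwichTrace a b z ρ σ + sandwichTrace a b z τ ω := by
  rw [sandwichTrace, mpow_fromBlocks hσ hω, mpow_fromBlocks hρ.1 hτ.1, fromBlocks_multiply,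
    fromBlocks_multiply]
  simp only [Matrix.mul_zero, Matrix.zero_mul, add_zero, zero_add]
  rw [mpow_fromBlocks (posSemidef_mpow_sandwich hρ a b σ).1 (posSemidef_mpow_sandwich hτ a b ω).1,
    retr, trace_fromBlocks, Complex.add_re]
  rfl

end Sandwich

section Incoherent

variable {n : Type*} [Fintype n] {K : Type*} [Fintype K]

theorem deph_smul (P : K → Matrix n n ℂ) (c : ℝ) (σ : Matrix n n ℂ) :
    deph P (c • σ) = c • deph P σ := by
  simp only [deph, Finset.smul_sum, Matrix.mul_smul, Matrix.smul_mul]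

theorem IsDensityMatrix.nonempty {ρ : Matrix n n ℂ} (hρ : IsDensityMatrix ρ) : Nonempty n := by
  by_contra h
  rw [not_nonempty_iff] at h
  simpa [trace] using hρ.2

variable [DecidableEq n]

theorem IsProjFamily.isBlockIncoherent_uniform {P : K → Matrix n n ℂ} (hP : IsProjFamily P)
    [Nonempty n] : IsBlockIncoherent P ((Fintype.card n : ℝ)⁻¹ • (1 : Matrix n n ℂ)) := by
  refine ⟨⟨PosSemidef.one.smul (by positivity), ?_⟩, ?_⟩
  · simp [trace_smul, Fintype.card_ne_zero]
  · rw [deph_smul, deph]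
    simp only [Matrix.mul_one, hP.2.1, hP.2.2.2]

end Incoherent

section DirectSum

variable {m p K L : Type*} [Fintype m] [Fintype p] [Fintype K] [Fintype L]

def projSum (P : K → Matrix m m ℂ) (T : L → Matrix p p ℂ) : K ⊕ L → Matrix (m ⊕ p) (m ⊕ p) ℂ :=
  Sum.elim (fun j => fromBlocks (P j) 0 0 0) (fun k => fromBlocks 0 0 0 (T k))

theorem deph_projSum_fromBlocks (P : K → Matrix m m ℂ) (T : L → Matrix p p ℂ)
    (X : Matrix m m ℂ) (Y : Matrix p p ℂ) :
    deph (projSum P T) (fromBlocks X 0 0 Y) = fromBlocks (deph P X) 0 0 (deph T Y) := by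
  ext (i | i) (j | j) <;>
    simp [deph, projSum, Fintype.sum_sum_type, fromBlocks_multiply, Matrix.sum_apply]

theorem isBlockIncoherent_projSum_fromBlocks {P : K → Matrix m m ℂ} {T : L → Matrix p p ℂ}
    {σ : Matrix m m ℂ} {ω : Matrix p p ℂ} (hσ : IsBlockIncoherent P σ)
    (hω : IsBlockIncoherent T ω) {l : ℝ} (hl : l ∈ Set.Icc (0 : ℝ) 1) :
    IsBlockIncoherent (projSum P T) (fromBlocks (l • σ) 0 0 ((1 - l) • ω)) := by
  obtain ⟨⟨hσ, hσ1⟩, hσP⟩ := hσ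
  obtain ⟨⟨hω, hω1⟩, hωT⟩ := hω
  refine ⟨⟨posSemidef_fromBlocks (hσ.smul hl.1) (hω.smul (sub_nonneg.mpr hl.2)), ?_⟩, ?_⟩
  · rw [trace_fromBlocks, trace_smul, trace_smul, hσ1, hω1]
    simp
  · rw [deph_projSum_fromBlocks, deph_smul, deph_smul, ← hσP, ← hωT]

end DirectSum

section Real

theorem exists_weight_rpow_mul_add_eq {α x y : ℝ} (hα : 0 < α) (hx : 0 ≤ x) (hy : 0 ≤ y) :
    ∃ l ∈ Set.Icc (0 : ℝ) 1,
      l ^ (1 - α) * x + (1 - l) ^ (1 - α) * y = (x ^ (1 / α) + y ^ (1 / α)) ^ α := by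
  have hx' : 0 ≤ x ^ (1 / α) := Real.rpow_nonneg hx _
  have hy' : 0 ≤ y ^ (1 / α) := Real.rpow_nonneg hy _
  rcases (add_nonneg hx' hy').eq_or_lt with hs | hs
  · have hne : 1 / α ≠ 0 := by positivity
    obtain rfl : x = 0 := (Real.rpow_eq_zero hx hne).mp (by linarith)
    obtain rfl : y = 0 := (Real.rpow_eq_zero hy hne).mp (by linarith)
    exact ⟨0, ⟨le_rfl, zero_le_one⟩, by rw [← hs, Real.zero_rpow hα.ne']; simp⟩
  set s := x ^ (1 / α) + y ^ (1 / α)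
  -- with `l = x^(1/α) / s` each term collapses to `u^(1/α) / s^(1-α)`
  have hterm : ∀ u, 0 ≤ u → (u ^ (1 / α) / s) ^ (1 - α) * u = u ^ (1 / α) / s ^ (1 - α) := by
    intro u hu
    have hexp : 1 / α * (1 - α) + 1 = 1 / α := by field_simp; ring
    rw [Real.div_rpow (Real.rpow_nonneg hu _) hs.le, ← Real.rpow_mul hu, div_mul_eq_mul_div,
      ← Real.rpow_add_one' hu (by rw [hexp]; positivity), hexp]
  refine ⟨x ^ (1 / α) / s, ⟨by positivity, div_le_one_of_le₀ (by linarith) hs.le⟩, ?_⟩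
  have hy_eq : 1 - x ^ (1 / α) / s = y ^ (1 / α) / s := by
    rw [eq_div_iff hs.ne', sub_mul, div_mul_cancel₀ _ hs.ne', one_mul]
    ring
  rw [hy_eq, hterm x hx, hterm y hy, ← add_div, Real.rpow_sub hs, Real.rpow_one,
    div_div_cancel₀ hs.ne']

theorem csSup_rpow_le {S : Set ℝ} (hS : S.Nonempty) (hS₀ : ∀ x ∈ S, 0 ≤ x) {r c : ℝ}
    (hr : 0 < r) (h : ∀ x ∈ S, x ^ r ≤ c) : sSup S ^ r ≤ c := by
  obtain ⟨x₀, hx₀⟩ := hS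
  have hc : 0 ≤ c := (Real.rpow_nonneg (hS₀ x₀ hx₀) r).trans (h x₀ hx₀)
  have hsup : sSup S ≤ c ^ r⁻¹ := csSup_le ⟨x₀, hx₀⟩ fun x hx =>
    calc x = (x ^ r) ^ r⁻¹ := (Real.rpow_rpow_inv (hS₀ x hx) hr.ne').symm
      _ ≤ c ^ r⁻¹ := Real.rpow_le_rpow (Real.rpow_nonneg (hS₀ x hx) r) (h x hx) (by positivity)
  calc sSup S ^ r ≤ (c ^ r⁻¹) ^ r := Real.rpow_le_rpow (Real.sSup_nonneg hS₀) hsup hr.le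
    _ = c := Real.rpow_inv_rpow hc hr.ne'

theorem rpow_sSup_add_rpow_sSup_le {S₁ S₂ S₃ : Set ℝ} {α : ℝ} (hα : 0 < α)
    (h₁ : S₁.Nonempty) (h₂ : S₂.Nonempty) (h₁₀ : ∀ x ∈ S₁, 0 ≤ x) (h₂₀ : ∀ y ∈ S₂, 0 ≤ y)
    (h₃ : BddAbove S₃) (hmix : ∀ x ∈ S₁, ∀ y ∈ S₂, (x ^ (1 / α) + y ^ (1 / α)) ^ α ∈ S₃) :
    sSup S₁ ^ (1 / α) + sSup S₂ ^ (1 / α) ≤ sSup S₃ ^ (1 / α) := by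
  have hr : 0 < 1 / α := by positivity
  have hpair : ∀ x ∈ S₁, ∀ y ∈ S₂, x ^ (1 / α) + y ^ (1 / α) ≤ sSup S₃ ^ (1 / α) := by
    intro x hx y hy
    have hxy : 0 ≤ x ^ (1 / α) + y ^ (1 / α) :=
      add_nonneg (Real.rpow_nonneg (h₁₀ x hx) _) (Real.rpow_nonneg (h₂₀ y hy) _)
    calc x ^ (1 / α) + y ^ (1 / α) = ((x ^ (1 / α) + y ^ (1 / α)) ^ α) ^ (1 / α) := by
          rw [← Real.rpow_mul hxy, mul_one_div_cancel hα.ne', Real.rpow_one]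
      _ ≤ sSup S₃ ^ (1 / α) :=
          Real.rpow_le_rpow (by positivity) (le_csSup h₃ (hmix x hx y hy)) hr.le
  have h₂' : ∀ x ∈ S₁, sSup S₂ ^ (1 / α) ≤ sSup S₃ ^ (1 / α) - x ^ (1 / α) := fun x hx =>
    csSup_rpow_le h₂ h₂₀ hr fun y hy => by linarith [hpair x hx y hy]
  have h₁' : sSup S₁ ^ (1 / α) ≤ sSup S₃ ^ (1 / α) - sSup S₂ ^ (1 / α) :=
    csSup_rpow_le h₁ h₁₀ hr fun x hx => by linarith [h₂' x hx]
  linarith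

end Real

section Caz

variable {n : Type*} [Fintype n] [DecidableEq n]

def freeSandwichTraces {K : Type*} [Fintype K] (α z : ℝ) (P : K → Matrix n n ℂ)
    (ρ : Matrix n n ℂ) : Set ℝ :=
  {x | ∃ σ, IsBlockIncoherent P σ ∧ x = sandwichTrace ((1 - α) / (2 * z)) (α / z) z ρ σ}

theorem Caz_eq {K : Type*} [Fintype K] (α z : ℝ) (P : K → Matrix n n ℂ) (ρ : Matrix n n ℂ) :
    Caz α z P ρ = 1 - sSup (freeSandwichTraces α z P ρ) ^ (1 / α) :=
  rfl

theorem freeSandwichTraces_nonempty {K : Type*} [Fintype K] {P : K → Matrix n n ℂ}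
    (hP : IsProjFamily P) {ρ : Matrix n n ℂ} (hρ : IsDensityMatrix ρ) (α z : ℝ) :
    (freeSandwichTraces α z P ρ).Nonempty :=
  have := hρ.nonempty
  ⟨_, _, hP.isBlockIncoherent_uniform, rfl⟩

theorem nonneg_of_mem_freeSandwichTraces {K : Type*} [Fintype K] {ρ : Matrix n n ℂ}
    (hρ : ρ.PosSemidef) {α z : ℝ} {P : K → Matrix n n ℂ} {x : ℝ}
    (hx : x ∈ freeSandwichTraces α z P ρ) : 0 ≤ x := by
  obtain ⟨σ, -, rfl⟩ := hx
  exact sandwichTrace_nonneg hρ _ _ _ σ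

theorem freeSandwichTraces_bddAbove {K : Type*} [Fintype K] {ρ : Matrix n n ℂ}
    (hρ : ρ.PosSemidef) {α z : ℝ} (hα : α < 1) (hz : 0 < z) (P : K → Matrix n n ℂ) :
    BddAbove (freeSandwichTraces α z P ρ) := by
  refine ⟨Fintype.card n * retr (mpow ρ (α / z)) ^ z, ?_⟩
  rintro _ ⟨σ, hσ, rfl⟩
  exact sandwichTrace_le hρ hσ.1 (div_pos (sub_pos.mpr hα) (by positivity)) _ hz.le

theorem rpow_add_rpow_mem_freeSandwichTraces_projSum {m p K L : Type*} [Fintype m]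
    [DecidableEq m] [Fintype p] [DecidableEq p] [Fintype K] [Fintype L] {P : K → Matrix m m ℂ}
    {T : L → Matrix p p ℂ} {ρ : Matrix m m ℂ} {τ : Matrix p p ℂ} (hρ : ρ.PosSemidef)
    (hτ : τ.PosSemidef) {α z : ℝ} (hα : 0 < α) (hz : z ≠ 0) {x y : ℝ}
    (hx : x ∈ freeSandwichTraces α z P ρ) (hy : y ∈ freeSandwichTraces α z T τ) :
    (x ^ (1 / α) + y ^ (1 / α)) ^ α ∈
      freeSandwichTraces α z (projSum P T) (fromBlocks ρ 0 0 τ) := by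
  obtain ⟨σ, hσ, rfl⟩ := hx
  obtain ⟨ω, hω, rfl⟩ := hy
  obtain ⟨l, hl, hmix⟩ := exists_weight_rpow_mul_add_eq hα
    (sandwichTrace_nonneg hρ _ _ _ σ) (sandwichTrace_nonneg hτ _ _ _ ω)
  have hl' : 0 ≤ 1 - l := sub_nonneg.mpr hl.2
  have hexp : 2 * ((1 - α) / (2 * z)) * z = 1 - α := by field_simp
  refine ⟨_, isBlockIncoherent_projSum_fromBlocks hσ hω hl, ?_⟩
  rw [sandwichTrace_fromBlocks hρ hτ (hσ.1.1.smul hl.1).1 (hω.1.1.smul hl').1,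
    sandwichTrace_smul hρ hσ.1.1 _ _ _ hl.1, sandwichTrace_smul hτ hω.1.1 _ _ _ hl', hexp, hmix]

/-- `C_{α,z}` is subadditive with respect to direct sums:
`C_{α,z}(ρ ⊕ τ, P ⊕ T) ≤ C_{α,z}(ρ,P) + C_{α,z}(τ,T)`. -/
theorem Caz_directSum_subadditive
    {m p K L : Type*} [Fintype m] [DecidableEq m] [Fintype p] [DecidableEq p]
    [Fintype K] [Fintype L]
    (P : K → Matrix m m ℂ) (hP : IsProjFamily P)
    (T : L → Matrix p p ℂ) (hT : IsProjFamily T)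
    (α z : ℝ) (hα : α ∈ Set.Ioo (0 : ℝ) 1) (hz : max α (1 - α) ≤ z)
    (ρ : Matrix m m ℂ) (hρ : IsDensityMatrix ρ)
    (τ : Matrix p p ℂ) (hτ : IsDensityMatrix τ) :
    Caz α z
        (Sum.elim (fun j : K => Matrix.fromBlocks (P j) 0 0 0)
          (fun k : L => Matrix.fromBlocks 0 0 0 (T k)))
        (Matrix.fromBlocks ρ 0 0 τ) ≤
      Caz α z P ρ + Caz α z T τ := by
  obtain ⟨hα₀, hα₁⟩ := hα
  have hz₀ : 0 < z := hα₀.trans_le ((le_max_left _ _).trans hz)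
  have hsup := rpow_sSup_add_rpow_sSup_le hα₀
    (freeSandwichTraces_nonempty hP hρ α z) (freeSandwichTraces_nonempty hT hτ α z)
    (fun _ => nonneg_of_mem_freeSandwichTraces hρ.1)
    (fun _ => nonneg_of_mem_freeSandwichTraces hτ.1)
    (freeSandwichTraces_bddAbove (posSemidef_fromBlocks hρ.1 hτ.1) hα₁ hz₀ (projSum P T))
    (fun _ hx _ hy => rpow_add_rpow_mem_freeSandwichTraces_projSum hρ.1 hτ.1 hα₀ hz₀.ne' hx hy)
  change Caz α z (projSum P T) (fromBlocks ρ 0 0 τ) ≤ _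
  rw [Caz_eq, Caz_eq, Caz_eq]
  linarith

end Caz

end BlockCoherence
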